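/- arXiv:2404.17592 — 4 statements merged into one kernel-verified Lean document; each statement's English description precedes it below -/
import Mathlib

section
/- Let S be a nonempty finite set, let R ≥ 0, and for each i ∈ S let r_i be a revenue with 0 ≤ r_i ≤ R. For utility vectors u = (u_i)_{i∈S} and u' = (u'_i)_{i∈S} of real numbers, define the MNL expected revenue Rev(u, S) = (∑_{i∈S} r_i · exp(u_i)) / (1 + ∑_{j∈S} exp(u_j)). Then Rev(u, S) − Rev(u', S) ≤ R · max_{i∈S} |u_i − u'_i|. -/
open Matrix BigOperators Finset

/-- MNL expected revenue of assortment `S` under utilities `u` and revenues `r`. -/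
noncomputable def mnlRev {ι : Type*} (S : Finset ι) (r u : ι → ℝ) : ℝ :=
  (∑ i ∈ S, r i * Real.exp (u i)) / (1 + ∑ j ∈ S, Real.exp (u j))

/-- Lemma 5 of Oh and Iyengar (2021) / Lemma S.3 of the paper:
the MNL expected revenue is Lipschitz in the utilities, with constant `R`
(an upper bound on the item revenues), in the sup-distance over the assortment. -/
theorem mnl_revenue_diff_le {ι : Type*} (S : Finset ι) (hS : S.Nonempty)
    (R : ℝ) (hR : 0 ≤ R) (r u u' : ι → ℝ)
    (hr : ∀ i ∈ S, 0 ≤ r i ∧ r i ≤ R) :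
    mnlRev S r u - mnlRev S r u' ≤ R * S.sup' hS (fun i => |u i - u' i|) := by
  classical
  set M := S.sup' hS (fun i => |u i - u' i|) with hMdef
  have hMk : ∀ k ∈ S, |u k - u' k| ≤ M := fun k hk => by
    rw [hMdef]; exact Finset.le_sup' (fun i => |u i - u' i|) hk
  obtain ⟨i0, hi0⟩ := id hS
  have hM0 : 0 ≤ M := le_trans (abs_nonneg (u i0 - u' i0)) (hMk i0 hi0)
  set v : ℝ → ι → ℝ := fun t i => u' i + t * (u i - u' i) with hvdef
  set N : ℝ → ℝ := fun t => ∑ i ∈ S, r i * Real.exp (v t i) with hNdef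
  set D : ℝ → ℝ := fun t => 1 + ∑ j ∈ S, Real.exp (v t j) with hDdef
  have hD1 : ∀ t, 1 ≤ D t := fun t =>
    le_add_of_nonneg_right (Finset.sum_nonneg fun i _ => (Real.exp_pos _).le)
  have hDpos : ∀ t, 0 < D t := fun t => lt_of_lt_of_le one_pos (hD1 t)
  set F : ℝ → ℝ := fun t => N t / D t with hFdef
  set F' : ℝ → ℝ := fun t =>
    ((∑ i ∈ S, r i * ((u i - u' i) * Real.exp (v t i))) * D t
      - N t * (∑ i ∈ S, (u i - u' i) * Real.exp (v t i))) / (D t) ^ 2 with hF'def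
  have hvder : ∀ i t, HasDerivAt (fun t => Real.exp (v t i))
      ((u i - u' i) * Real.exp (v t i)) t := by
    intro i t
    have h1 : HasDerivAt (fun t : ℝ => u' i + t * (u i - u' i)) (u i - u' i) t :=
      (hasDerivAt_mul_const (u i - u' i)).const_add (u' i)
    simpa [mul_comm] using h1.exp
  have hF : ∀ t, HasDerivAt F (F' t) t := by
    intro t
    have hN : HasDerivAt N (∑ i ∈ S, r i * ((u i - u' i) * Real.exp (v t i))) t :=
      HasDerivAt.fun_sum fun i _ => (hvder i t).const_mul (r i)
    have hD : HasDerivAt D (∑ i ∈ S, (u i - u' i) * Real.exp (v t i)) t :=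
      (HasDerivAt.fun_sum fun i _ => hvder i t).const_add 1
    exact hN.div hD (hDpos t).ne'
  have hbound : ∀ t, |F' t| ≤ R * M := by
    intro t
    have hNle : N t ≤ R * (D t - 1) := by
      have h1 : ∑ i ∈ S, r i * Real.exp (v t i) ≤ ∑ i ∈ S, R * Real.exp (v t i) :=
        Finset.sum_le_sum fun i hi =>
          mul_le_mul_of_nonneg_right (hr i hi).2 (Real.exp_pos _).le
      calc N t ≤ ∑ i ∈ S, R * Real.exp (v t i) := h1
        _ = R * (D t - 1) := by
          have hDt : D t - 1 = ∑ j ∈ S, Real.exp (v t j) := by simp [hDdef]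
          rw [hDt, Finset.mul_sum]
    have hN0 : 0 ≤ N t :=
      Finset.sum_nonneg fun i hi => mul_nonneg (hr i hi).1 (Real.exp_pos _).le
    have hfactor : ∀ i ∈ S, |r i * D t - N t| ≤ R * D t := by
      intro i hi
      rw [abs_le]
      constructor
      · have h2 : N t ≤ R * D t := hNle.trans (by nlinarith [hDpos t])
        nlinarith [mul_nonneg (hr i hi).1 (hDpos t).le]
      · have h3 : r i * D t ≤ R * D t :=
          mul_le_mul_of_nonneg_right (hr i hi).2 (hDpos t).le
        linarith
    have hnum : (∑ i ∈ S, r i * ((u i - u' i) * Real.exp (v t i))) * D t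
        - N t * (∑ i ∈ S, (u i - u' i) * Real.exp (v t i))
        = ∑ i ∈ S, (u i - u' i) * Real.exp (v t i) * (r i * D t - N t) := by
      rw [hNdef, Finset.sum_mul, Finset.mul_sum, ← Finset.sum_sub_distrib]
      exact Finset.sum_congr rfl fun i hi => by ring
    have habs : |∑ i ∈ S, (u i - u' i) * Real.exp (v t i) * (r i * D t - N t)|
        ≤ ∑ i ∈ S, M * Real.exp (v t i) * (R * D t) := by
      refine (Finset.abs_sum_le_sum_abs _ _).trans (Finset.sum_le_sum fun i hi => ?_)
      rw [abs_mul, abs_mul, abs_of_pos (Real.exp_pos _)]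
      refine mul_le_mul ?_ (hfactor i hi) (abs_nonneg _) (by positivity)
      exact mul_le_mul_of_nonneg_right (hMk i hi) (Real.exp_pos _).le
    have hsum : ∑ i ∈ S, M * Real.exp (v t i) * (R * D t)
        = M * (R * D t) * (D t - 1) := by
      rw [← Finset.sum_mul]
      rw [← Finset.mul_sum]
      have : (∑ i ∈ S, Real.exp (v t i)) = D t - 1 := by simp [hDdef]
      rw [this]; ring
    have hD2 : M * (R * D t) * (D t - 1) ≤ R * M * (D t) ^ 2 := by
      nlinarith [hDpos t, hD1 t, mul_nonneg hR hM0, mul_nonneg (mul_nonneg hR hM0) (hDpos t).le]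
    have hnumabs : |(∑ i ∈ S, r i * ((u i - u' i) * Real.exp (v t i))) * D t
        - N t * (∑ i ∈ S, (u i - u' i) * Real.exp (v t i))| ≤ R * M * (D t) ^ 2 := by
      rw [hnum]
      exact habs.trans (by rw [hsum]; exact hD2)
    rw [hF'def]
    rw [abs_div, abs_of_pos (by positivity : (0:ℝ) < (D t) ^ 2)]
    rw [div_le_iff₀ (by positivity : (0:ℝ) < (D t) ^ 2)]
    calc |_| ≤ R * M * (D t) ^ 2 := hnumabs
      _ = R * M * (D t) ^ 2 := rfl
  have key := norm_image_sub_le_of_norm_deriv_le_segment'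
    (f := F) (f' := F') (C := R * M) (a := (0:ℝ)) (b := 1)
    (fun x _ => (hF x).hasDerivWithinAt) (fun x hx => hbound x)
    1 (by norm_num : (1:ℝ) ∈ Set.Icc (0:ℝ) 1)
  have hF1 : F 1 = mnlRev S r u := by
    simp [hFdef, hNdef, hDdef, hvdef, mnlRev]
  have hF0 : F 0 = mnlRev S r u' := by
    simp [hFdef, hNdef, hDdef, hvdef, mnlRev]
  have : |mnlRev S r u - mnlRev S r u'| ≤ R * M := by
    rw [← hF1, ← hF0]
    simpa using key
  calc mnlRev S r u - mnlRev S r u' ≤ |mnlRev S r u - mnlRev S r u'| := le_abs_self _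
    _ ≤ R * M := this
end

section
/- Let S be a finite set, let x_i ∈ ℝ^d for each i ∈ S, and let p_i ≥ 0 be weights with ∑_{i∈S} p_i ≤ 1. Set p_0 = 1 − ∑_{i∈S} p_i. Then ∑_{i∈S} p_i x_i x_iᵀ − (∑_{i∈S} p_i x_i)(∑_{i∈S} p_i x_i)ᵀ ⪰ p_0 · ∑_{i∈S} p_i x_i x_iᵀ, where A ⪰ B means that A − B is a positive semidefinite matrix. -/
open Matrix BigOperators Finset

lemma sum_mulVec' {α : Type*} {d : ℕ} (S : Finset α) (M : α → Matrix (Fin d) (Fin d) ℝ)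
    (y : Fin d → ℝ) : (∑ i ∈ S, M i) *ᵥ y = ∑ i ∈ S, M i *ᵥ y := by
  induction S using Finset.cons_induction with
  | empty => simp
  | cons i s hi ih => simp [Finset.sum_cons, Matrix.add_mulVec, ih]

lemma dotProduct_sum' {α : Type*} {d : ℕ} (S : Finset α) (y : Fin d → ℝ)
    (f : α → Fin d → ℝ) : y ⬝ᵥ (∑ i ∈ S, f i) = ∑ i ∈ S, y ⬝ᵥ f i := by
  induction S using Finset.cons_induction with
  | empty => simp
  | cons i s hi ih => simp [Finset.sum_cons, dotProduct_add, ih]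

lemma quad_vecMulVec {d : ℕ} (u y : Fin d → ℝ) :
    y ⬝ᵥ (Matrix.vecMulVec u u) *ᵥ y = (u ⬝ᵥ y) ^ 2 := by
  simp only [Matrix.vecMulVec, Matrix.mulVec, dotProduct, Matrix.of_apply, sq,
    Finset.mul_sum, Finset.sum_mul]
  rw [Finset.sum_comm]
  exact Finset.sum_congr rfl fun i _ => Finset.sum_congr rfl fun j _ => by ring

/-- Key lower-bound step in the proof of restricted strong convexity (Lemma S.5):
for MNL choice probabilities `p i` (nonnegative, summing to at most 1 over the
assortment `S`, with no-purchase probability `p₀ = 1 - ∑ p i`),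
∑ pᵢ xᵢxᵢᵀ − (∑ pᵢ xᵢ)(∑ pᵢ xᵢ)ᵀ ⪰ p₀ · ∑ pᵢ xᵢxᵢᵀ in the Loewner order. -/
theorem mnl_hessian_lower {ι : Type*} {d : ℕ} (S : Finset ι)
    (x : ι → Fin d → ℝ) (p : ι → ℝ)
    (hp : ∀ i ∈ S, 0 ≤ p i) (hsum : ∑ i ∈ S, p i ≤ 1) :
    ((∑ i ∈ S, p i • Matrix.vecMulVec (x i) (x i))
      - Matrix.vecMulVec (∑ i ∈ S, p i • x i) (∑ i ∈ S, p i • x i)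
      - (1 - ∑ i ∈ S, p i) • (∑ i ∈ S, p i • Matrix.vecMulVec (x i) (x i))).PosSemidef := by
  set s : ℝ := ∑ i ∈ S, p i with hs
  set A : Matrix (Fin d) (Fin d) ℝ := ∑ i ∈ S, p i • Matrix.vecMulVec (x i) (x i) with hA
  set v : Fin d → ℝ := ∑ i ∈ S, p i • x i with hv
  have key : A - Matrix.vecMulVec v v - (1 - s) • A
      = s • A - Matrix.vecMulVec v v := by
    rw [sub_smul, one_smul]; module
  rw [key]
  refine Matrix.PosSemidef.of_dotProduct_mulVec_nonneg ?_ ?_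
  · -- Hermitian
    ext i j
    simp only [Matrix.conjTranspose_apply, Matrix.sub_apply, Matrix.smul_apply, hA,
      Matrix.sum_apply, Matrix.vecMulVec_apply, star_trivial, smul_eq_mul]
    congr 1
    · rw [Finset.mul_sum, Finset.mul_sum]
      exact Finset.sum_congr rfl fun k _ => by ring
    · exact mul_comm _ _
  · intro y
    have hsy : star y = y := by ext i; simp
    have hquadA : y ⬝ᵥ A *ᵥ y = ∑ i ∈ S, p i * (x i ⬝ᵥ y) ^ 2 := by
      rw [hA, sum_mulVec', dotProduct_sum']
      refine Finset.sum_congr rfl fun i _ => ?_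
      rw [Matrix.smul_mulVec, dotProduct_smul, quad_vecMulVec]
      simp
    have hvy : v ⬝ᵥ y = ∑ i ∈ S, p i * (x i ⬝ᵥ y) := by
      rw [hv]
      simp only [dotProduct, Finset.sum_apply, Pi.smul_apply, smul_eq_mul,
        Finset.sum_mul, Finset.mul_sum]
      rw [Finset.sum_comm]
      exact Finset.sum_congr rfl fun i _ => Finset.sum_congr rfl fun j _ => by ring
    have hq : y ⬝ᵥ (s • A - Matrix.vecMulVec v v) *ᵥ y
        = s * (∑ i ∈ S, p i * (x i ⬝ᵥ y) ^ 2) - (∑ i ∈ S, p i * (x i ⬝ᵥ y)) ^ 2 := by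
      rw [Matrix.sub_mulVec, dotProduct_sub, Matrix.smul_mulVec,
        dotProduct_smul, hquadA, quad_vecMulVec, hvy]
      simp
    rw [hsy, hq]
    rw [sub_nonneg]
    exact Finset.sum_sq_le_sum_mul_sum_of_sq_eq_mul S hp
      (fun i hi => mul_nonneg (hp i hi) (sq_nonneg _))
      (fun i hi => by ring)
end

section
/- For i = 1, 2 let U_i ∈ ℝ^{d₁×r} and V_i ∈ ℝ^{d₂×r}, set X_i = U_i V_iᵀ, and let Z_i ∈ ℝ^{(d₁+d₂)×r} be the vertical stacking of U_i on top of V_i. Define d(Z₁, Z₂) = min over orthogonal matrices R ∈ ℝ^{r×r} (RᵀR = R Rᵀ = I_r) of ‖Z₁ − Z₂ R‖_F. Then ‖X₁ − X₂‖_F² ≤ 2 · (‖Z₂‖₂ + d(Z₁, Z₂))² · d(Z₁, Z₂)², where ‖·‖₂ denotes the spectral (operator) norm and ‖·‖_F the Frobenius norm. -/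
open Matrix BigOperators Finset

/-- Frobenius norm of a real matrix. -/
noncomputable def frobNorm {m n : Type*} [Fintype m] [Fintype n] (A : Matrix m n ℝ) : ℝ :=
  Real.sqrt (∑ i, ∑ j, (A i j) ^ 2)

/-- Spectral (operator) norm of a real matrix: the supremum of `‖A x‖₂` over
Euclidean unit vectors `x`. -/
noncomputable def specNorm {m n : Type*} [Fintype m] [Fintype n] (A : Matrix m n ℝ) : ℝ :=
  sSup {c | ∃ x : n → ℝ, (∑ j, (x j) ^ 2) = 1 ∧ c = Real.sqrt (∑ i, (A.mulVec x i) ^ 2)}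

/-- Rotation-invariant distance: the minimum of `‖Z₁ − Z₂ R‖_F` over
`r × r` orthogonal matrices `R`. -/
noncomputable def rotDist {ι : Type*} [Fintype ι] {r : ℕ}
    (Z₁ Z₂ : Matrix ι (Fin r) ℝ) : ℝ :=
  sInf {c | ∃ R : Matrix (Fin r) (Fin r) ℝ,
      Rᵀ * R = 1 ∧ R * Rᵀ = 1 ∧ c = frobNorm (Z₁ - Z₂ * R)}

namespace PropS4

variable {m n p q : Type*} [Fintype m] [Fintype n] [Fintype p] [Fintype q]

/-- Euclidean norm of a finite real vector. -/
noncomputable def en (x : n → ℝ) : ℝ := Real.sqrt (∑ j, (x j) ^ 2)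

lemma en_nonneg (x : n → ℝ) : 0 ≤ en x := Real.sqrt_nonneg _

lemma en_sq (x : n → ℝ) : en x ^ 2 = ∑ j, (x j) ^ 2 :=
  Real.sq_sqrt (Finset.sum_nonneg fun _ _ => sq_nonneg _)

lemma le_of_sq_le_sq {a b : ℝ} (ha : 0 ≤ a) (hb : 0 ≤ b) (h : a ^ 2 ≤ b ^ 2) : a ≤ b := by
  nlinarith

lemma en_cauchy (x y : n → ℝ) : ∑ j, x j * y j ≤ en x * en y := by
  have h := Finset.sum_mul_sq_le_sq_mul_sq Finset.univ x y
  calc ∑ j, x j * y j ≤ |∑ j, x j * y j| := le_abs_self _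
    _ = Real.sqrt ((∑ j, x j * y j) ^ 2) := (Real.sqrt_sq_eq_abs _).symm
    _ ≤ Real.sqrt ((∑ j, x j ^ 2) * ∑ j, y j ^ 2) := Real.sqrt_le_sqrt h
    _ = en x * en y := Real.sqrt_mul (Finset.sum_nonneg fun _ _ => sq_nonneg _) _

lemma en_add_le (x y : n → ℝ) : en (x + y) ≤ en x + en y := by
  refine le_of_sq_le_sq (en_nonneg _) (add_nonneg (en_nonneg _) (en_nonneg _)) ?_
  have hx := en_sq x
  have hy := en_sq y
  have hxy := en_cauchy x y
  have hexp : en (x + y) ^ 2 = ∑ j, (x j) ^ 2 + 2 * (∑ j, x j * y j) + ∑ j, (y j) ^ 2 := by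
    rw [en_sq]
    have : ∀ j ∈ Finset.univ, ((x + y) j) ^ 2
        = (x j) ^ 2 + 2 * (x j * y j) + (y j) ^ 2 := fun j _ => by
      simp only [Pi.add_apply]; ring
    rw [Finset.sum_congr rfl this, Finset.sum_add_distrib, Finset.sum_add_distrib,
      ← Finset.mul_sum]
  nlinarith [en_nonneg x, en_nonneg y]

lemma en_smul (c : ℝ) (x : n → ℝ) : en (c • x) = |c| * en x := by
  unfold en
  have : ∑ j, ((c • x) j) ^ 2 = c ^ 2 * ∑ j, (x j) ^ 2 := by
    rw [Finset.mul_sum]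
    refine Finset.sum_congr rfl fun j _ => ?_
    simp [mul_pow]
  rw [this, Real.sqrt_mul (sq_nonneg _), Real.sqrt_sq_eq_abs]

/-! ### Frobenius norm lemmas -/

lemma frob_nonneg (A : Matrix m n ℝ) : 0 ≤ frobNorm A := Real.sqrt_nonneg _

lemma frob_sq (A : Matrix m n ℝ) : frobNorm A ^ 2 = ∑ i, ∑ j, (A i j) ^ 2 :=
  Real.sq_sqrt (Finset.sum_nonneg fun _ _ => Finset.sum_nonneg fun _ _ => sq_nonneg _)

lemma frob_eq_en (A : Matrix m n ℝ) : frobNorm A = en (fun x : m × n => A x.1 x.2) := by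
  unfold frobNorm en
  rw [Fintype.sum_prod_type]

lemma frob_add_le (A B : Matrix m n ℝ) : frobNorm (A + B) ≤ frobNorm A + frobNorm B := by
  rw [frob_eq_en, frob_eq_en A, frob_eq_en B]
  exact en_add_le _ _

lemma frob_transpose (A : Matrix m n ℝ) : frobNorm Aᵀ = frobNorm A := by
  unfold frobNorm
  rw [Finset.sum_comm]
  simp [Matrix.transpose_apply]

lemma en_mulVec_le_frob (A : Matrix m n ℝ) (x : n → ℝ) :
    en (A.mulVec x) ≤ frobNorm A * en x := by
  refine le_of_sq_le_sq (en_nonneg _) (mul_nonneg (frob_nonneg _) (en_nonneg _)) ?_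
  rw [mul_pow, en_sq, en_sq, frob_sq, Finset.sum_mul]
  refine Finset.sum_le_sum fun i _ => ?_
  have : A.mulVec x i = ∑ j, A i j * x j := rfl
  rw [this]
  exact Finset.sum_mul_sq_le_sq_mul_sq Finset.univ _ _

/-! ### Spectral norm lemmas -/

lemma spec_bddAbove (A : Matrix m n ℝ) :
    BddAbove {c | ∃ x : n → ℝ, (∑ j, (x j) ^ 2) = 1 ∧
      c = Real.sqrt (∑ i, (A.mulVec x i) ^ 2)} := by
  refine ⟨frobNorm A, fun c hc => ?_⟩
  obtain ⟨x, hx, rfl⟩ := hc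
  have h1 : en x = 1 := by unfold en; rw [hx, Real.sqrt_one]
  have := en_mulVec_le_frob A x
  rw [h1, mul_one] at this
  exact this

lemma spec_nonneg (A : Matrix m n ℝ) : 0 ≤ specNorm A := by
  refine Real.sSup_nonneg fun c hc => ?_
  obtain ⟨x, _, rfl⟩ := hc
  exact Real.sqrt_nonneg _

lemma en_mulVec_le_spec_unit (A : Matrix m n ℝ) {x : n → ℝ} (hx : ∑ j, (x j) ^ 2 = 1) :
    en (A.mulVec x) ≤ specNorm A :=
  le_csSup (spec_bddAbove A) ⟨x, hx, rfl⟩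

lemma spec_le_of (A : Matrix m n ℝ) {b : ℝ} (hb : 0 ≤ b)
    (h : ∀ x : n → ℝ, (∑ j, (x j) ^ 2) = 1 → en (A.mulVec x) ≤ b) :
    specNorm A ≤ b := by
  refine Real.sSup_le (fun c hc => ?_) hb
  obtain ⟨x, hx, rfl⟩ := hc
  exact h x hx

lemma en_mulVec_le_spec (A : Matrix m n ℝ) (x : n → ℝ) :
    en (A.mulVec x) ≤ specNorm A * en x := by
  by_cases h : ∑ j, (x j) ^ 2 = 0
  · have hx0 : x = 0 := by
      funext j
      have := (Finset.sum_eq_zero_iff_of_nonneg (fun j _ => sq_nonneg (x j))).1 h j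
        (Finset.mem_univ j)
      exact pow_eq_zero_iff (two_ne_zero) |>.1 this
    subst hx0
    have h1 : en (A.mulVec (0 : n → ℝ)) = 0 := by
      rw [Matrix.mulVec_zero]
      unfold en; simp
    have h2 : en (0 : n → ℝ) = 0 := by unfold en; simp
    rw [h1, h2, mul_zero]
  · have hpos : 0 < ∑ j, (x j) ^ 2 :=
      lt_of_le_of_ne (Finset.sum_nonneg fun _ _ => sq_nonneg _) (Ne.symm h)
    set t := en x with ht
    have ht0 : 0 < t := Real.sqrt_pos.2 hpos
    set u : n → ℝ := t⁻¹ • x with hu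
    have hux : x = t • u := by
      rw [hu, smul_smul, mul_inv_cancel₀ ht0.ne', one_smul]
    have huu : ∑ j, (u j) ^ 2 = 1 := by
      have h2 : ∑ j, (u j) ^ 2 = t⁻¹ ^ 2 * ∑ j, (x j) ^ 2 := by
        rw [Finset.mul_sum]
        refine Finset.sum_congr rfl fun j _ => ?_
        simp [hu, mul_pow]
      have h3 : t ^ 2 = ∑ j, (x j) ^ 2 := en_sq x
      rw [h2, ← h3]
      field_simp
    calc en (A.mulVec x) = en (A.mulVec (t • u)) := by rw [← hux]
      _ = en (t • A.mulVec u) := by rw [Matrix.mulVec_smul]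
      _ = |t| * en (A.mulVec u) := en_smul _ _
      _ = t * en (A.mulVec u) := by rw [abs_of_pos ht0]
      _ ≤ t * specNorm A := by
          exact mul_le_mul_of_nonneg_left (en_mulVec_le_spec_unit A huu) ht0.le
      _ = specNorm A * en x := by rw [mul_comm]

lemma frob_mul_le (M : Matrix m n ℝ) (N : Matrix n p ℝ) :
    frobNorm (M * N) ≤ specNorm M * frobNorm N := by
  refine le_of_sq_le_sq (frob_nonneg _) (mul_nonneg (spec_nonneg _) (frob_nonneg _)) ?_
  calc frobNorm (M * N) ^ 2 = ∑ j, ∑ i, ((M * N) i j) ^ 2 := by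
        rw [frob_sq, Finset.sum_comm]
    _ ≤ ∑ j, specNorm M ^ 2 * ∑ k, (N k j) ^ 2 := by
        refine Finset.sum_le_sum fun j _ => ?_
        have hcol : ∀ i, (M * N) i j = M.mulVec (fun k => N k j) i := fun i => rfl
        have h1 : ∑ i, ((M * N) i j) ^ 2 = en (M.mulVec (fun k => N k j)) ^ 2 := by
          rw [en_sq]
          exact Finset.sum_congr rfl fun i _ => by rw [hcol i]
        have h2 : en (M.mulVec (fun k => N k j)) ≤ specNorm M * en (fun k => N k j) :=
          en_mulVec_le_spec _ _
        have h3 : en (M.mulVec (fun k => N k j)) ^ 2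
            ≤ (specNorm M * en (fun k => N k j)) ^ 2 :=
          pow_le_pow_left₀ (en_nonneg _) h2 2
        rw [h1]
        calc en (M.mulVec (fun k => N k j)) ^ 2
            ≤ (specNorm M * en (fun k => N k j)) ^ 2 := h3
          _ = specNorm M ^ 2 * ∑ k, (N k j) ^ 2 := by rw [mul_pow, en_sq]
    _ = specNorm M ^ 2 * ∑ k, ∑ j, (N k j) ^ 2 := by
        rw [← Finset.mul_sum, Finset.sum_comm]
    _ = (specNorm M * frobNorm N) ^ 2 := by rw [mul_pow, frob_sq]

lemma sum_sq_mulVec_orth {r : ℕ} {R : Matrix (Fin r) (Fin r) ℝ} (hR : Rᵀ * R = 1)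
    (x : Fin r → ℝ) : ∑ i, (R.mulVec x i) ^ 2 = ∑ j, (x j) ^ 2 := by
  have h1 : Rᵀ *ᵥ (R *ᵥ x) = x := by
    rw [Matrix.mulVec_mulVec, hR, Matrix.one_mulVec]
  have h2 : (R *ᵥ x) ᵥ* R = x := by
    rw [← Matrix.transpose_transpose R, Matrix.vecMul_transpose, Matrix.transpose_transpose, h1]
  calc ∑ i, (R.mulVec x i) ^ 2 = (R *ᵥ x) ⬝ᵥ (R *ᵥ x) := by
        simp [dotProduct, sq]
    _ = ((R *ᵥ x) ᵥ* R) ⬝ᵥ x := Matrix.dotProduct_mulVec _ _ _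
    _ = x ⬝ᵥ x := by rw [h2]
    _ = ∑ j, (x j) ^ 2 := by simp [dotProduct, sq]

lemma spec_mul_orth_le {r : ℕ} (A : Matrix m (Fin r) ℝ) {R : Matrix (Fin r) (Fin r) ℝ}
    (hR : Rᵀ * R = 1) : specNorm (A * R) ≤ specNorm A := by
  refine spec_le_of _ (spec_nonneg A) fun x hx => ?_
  have h1 : (A * R).mulVec x = A.mulVec (R.mulVec x) := (Matrix.mulVec_mulVec x A R).symm
  rw [h1]
  exact en_mulVec_le_spec_unit A (by rw [sum_sq_mulVec_orth hR x, hx])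

lemma en_sq_fromRows (U : Matrix m p ℝ) (V : Matrix n p ℝ) (x : p → ℝ) :
    en ((Matrix.fromRows U V).mulVec x) ^ 2 = en (U.mulVec x) ^ 2 + en (V.mulVec x) ^ 2 := by
  rw [en_sq, en_sq, en_sq, Matrix.fromRows_mulVec, Fintype.sum_sum_type]
  simp

lemma spec_top_le (U : Matrix m p ℝ) (V : Matrix n p ℝ) :
    specNorm U ≤ specNorm (Matrix.fromRows U V) := by
  refine spec_le_of _ (spec_nonneg _) fun x hx => ?_
  have h1 : en (U.mulVec x) ≤ en ((Matrix.fromRows U V).mulVec x) := by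
    refine le_of_sq_le_sq (en_nonneg _) (en_nonneg _) ?_
    rw [en_sq_fromRows]
    exact le_add_of_nonneg_right (sq_nonneg _)
  exact h1.trans (en_mulVec_le_spec_unit _ hx)

lemma spec_bot_le (U : Matrix m p ℝ) (V : Matrix n p ℝ) :
    specNorm V ≤ specNorm (Matrix.fromRows U V) := by
  refine spec_le_of _ (spec_nonneg _) fun x hx => ?_
  have h1 : en (V.mulVec x) ≤ en ((Matrix.fromRows U V).mulVec x) := by
    refine le_of_sq_le_sq (en_nonneg _) (en_nonneg _) ?_
    rw [en_sq_fromRows]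
    exact le_add_of_nonneg_left (sq_nonneg _)
  exact h1.trans (en_mulVec_le_spec_unit _ hx)

lemma spec_le_spec_add_frob (Z W : Matrix m n ℝ) :
    specNorm Z ≤ specNorm W + frobNorm (Z - W) := by
  refine spec_le_of _ (add_nonneg (spec_nonneg _) (frob_nonneg _)) fun x hx => ?_
  have hx1 : en x = 1 := by unfold en; rw [hx, Real.sqrt_one]
  have hdec : Z.mulVec x = W.mulVec x + (Z - W).mulVec x := by
    rw [← Matrix.add_mulVec, add_sub_cancel]
  calc en (Z.mulVec x) = en (W.mulVec x + (Z - W).mulVec x) := by rw [← hdec]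
    _ ≤ en (W.mulVec x) + en ((Z - W).mulVec x) := en_add_le _ _
    _ ≤ specNorm W + frobNorm (Z - W) := by
        have h1 := en_mulVec_le_spec_unit W hx
        have h2 := en_mulVec_le_frob (Z - W) x
        rw [hx1, mul_one] at h2
        linarith

lemma frob_sq_fromRows (U : Matrix m p ℝ) (V : Matrix n p ℝ) :
    frobNorm (Matrix.fromRows U V) ^ 2 = frobNorm U ^ 2 + frobNorm V ^ 2 := by
  rw [frob_sq, frob_sq, frob_sq, Fintype.sum_sum_type]
  simp

lemma key {d₁ d₂ r : ℕ}
    (U₁ U₂ : Matrix (Fin d₁) (Fin r) ℝ) (V₁ V₂ : Matrix (Fin d₂) (Fin r) ℝ)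
    (R : Matrix (Fin r) (Fin r) ℝ) (h1 : Rᵀ * R = 1) (h2 : R * Rᵀ = 1) :
    (frobNorm (U₁ * V₁ᵀ - U₂ * V₂ᵀ)) ^ 2
      ≤ 2 * (specNorm (Matrix.fromRows U₂ V₂)
              + frobNorm (Matrix.fromRows U₁ V₁ - Matrix.fromRows U₂ V₂ * R)) ^ 2
          * (frobNorm (Matrix.fromRows U₁ V₁ - Matrix.fromRows U₂ V₂ * R)) ^ 2 := by
  set A := U₁ - U₂ * R with hA
  set B := V₁ - V₂ * R with hB
  set S := specNorm (Matrix.fromRows U₂ V₂) with hS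
  set D := frobNorm (Matrix.fromRows U₁ V₁ - Matrix.fromRows U₂ V₂ * R) with hD
  have hsplit : Matrix.fromRows U₁ V₁ - Matrix.fromRows U₂ V₂ * R = Matrix.fromRows A B := by
    rw [Matrix.fromRows_mul]
    ext (i | i) j <;> simp [hA, hB, Matrix.fromRows_apply_inl, Matrix.fromRows_apply_inr]
  have hD2 : frobNorm A ^ 2 + frobNorm B ^ 2 = D ^ 2 := by
    rw [hD, hsplit, frob_sq_fromRows]
  have hUV : U₂ * V₂ᵀ = (U₂ * R) * (V₂ * R)ᵀ := by
    rw [Matrix.transpose_mul, Matrix.mul_assoc, ← Matrix.mul_assoc R, h2, Matrix.one_mul]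
  have hdecomp : U₁ * V₁ᵀ - U₂ * V₂ᵀ = A * V₁ᵀ + (U₂ * R) * Bᵀ := by
    rw [hUV, hA, hB, Matrix.sub_mul, Matrix.transpose_sub, Matrix.mul_sub,
      sub_add_sub_cancel]
  -- spectral norm bounds
  have hspecV1 : specNorm V₁ ≤ S + D := by
    calc specNorm V₁ ≤ specNorm (Matrix.fromRows U₁ V₁) := spec_bot_le _ _
      _ ≤ specNorm (Matrix.fromRows U₂ V₂ * R)
          + frobNorm (Matrix.fromRows U₁ V₁ - Matrix.fromRows U₂ V₂ * R) :=
        spec_le_spec_add_frob _ _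
      _ ≤ S + D := by
        have := spec_mul_orth_le (Matrix.fromRows U₂ V₂) h1
        rw [hS, hD]; linarith
  have hD0 : 0 ≤ D := frob_nonneg _
  have hspecU2 : specNorm (U₂ * R) ≤ S + D := by
    have ha := spec_mul_orth_le U₂ h1
    have hb := spec_top_le U₂ V₂
    linarith
  -- Frobenius bound on the two terms
  have hterm1 : frobNorm (A * V₁ᵀ) ≤ specNorm V₁ * frobNorm A := by
    have : frobNorm (A * V₁ᵀ) = frobNorm (V₁ * Aᵀ) := by
      rw [← frob_transpose (A * V₁ᵀ), Matrix.transpose_mul, Matrix.transpose_transpose]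
    rw [this, ← frob_transpose A]
    exact frob_mul_le _ _
  have hterm2 : frobNorm ((U₂ * R) * Bᵀ) ≤ specNorm (U₂ * R) * frobNorm B := by
    have := frob_mul_le (U₂ * R) Bᵀ
    rw [frob_transpose] at this
    exact this
  have hfA : 0 ≤ frobNorm A := frob_nonneg _
  have hfB : 0 ≤ frobNorm B := frob_nonneg _
  have hSD : 0 ≤ S + D := add_nonneg (spec_nonneg _) hD0
  have hX : frobNorm (U₁ * V₁ᵀ - U₂ * V₂ᵀ) ≤ (S + D) * frobNorm A + (S + D) * frobNorm B := by
    calc frobNorm (U₁ * V₁ᵀ - U₂ * V₂ᵀ) = frobNorm (A * V₁ᵀ + (U₂ * R) * Bᵀ) := by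
          rw [hdecomp]
      _ ≤ frobNorm (A * V₁ᵀ) + frobNorm ((U₂ * R) * Bᵀ) := frob_add_le _ _
      _ ≤ specNorm V₁ * frobNorm A + specNorm (U₂ * R) * frobNorm B := by
          gcongr
      _ ≤ (S + D) * frobNorm A + (S + D) * frobNorm B := by
          gcongr
  have hfX : 0 ≤ frobNorm (U₁ * V₁ᵀ - U₂ * V₂ᵀ) := frob_nonneg _
  have hsq : frobNorm (U₁ * V₁ᵀ - U₂ * V₂ᵀ) ^ 2
      ≤ ((S + D) * frobNorm A + (S + D) * frobNorm B) ^ 2 :=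
    pow_le_pow_left₀ hfX hX 2
  nlinarith [sq_nonneg (frobNorm A - frobNorm B), sq_nonneg (S + D), hD2, hsq]

end PropS4

open PropS4 in
/-- Proposition S.4 of the paper: for factored matrices `Xᵢ = Uᵢ Vᵢᵀ` and stacked
factors `Zᵢ = [Uᵢ; Vᵢ]`,
`‖X₁ − X₂‖_F² ≤ 2 (‖Z₂‖₂ + d(Z₁, Z₂))² d(Z₁, Z₂)²`. -/
theorem factored_dist_bound {d₁ d₂ r : ℕ}
    (U₁ U₂ : Matrix (Fin d₁) (Fin r) ℝ) (V₁ V₂ : Matrix (Fin d₂) (Fin r) ℝ) :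
    (frobNorm (U₁ * V₁ᵀ - U₂ * V₂ᵀ)) ^ 2
      ≤ 2 * (specNorm (Matrix.fromRows U₂ V₂)
              + rotDist (Matrix.fromRows U₁ V₁) (Matrix.fromRows U₂ V₂)) ^ 2
          * (rotDist (Matrix.fromRows U₁ V₁) (Matrix.fromRows U₂ V₂)) ^ 2 := by
  set Z₁ := Matrix.fromRows U₁ V₁ with hZ1
  set Z₂ := Matrix.fromRows U₂ V₂ with hZ2
  set S := specNorm Z₂ with hSdef
  set dd := rotDist Z₁ Z₂ with hdd
  set s : Set ℝ := {c | ∃ R : Matrix (Fin r) (Fin r) ℝ,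
      Rᵀ * R = 1 ∧ R * Rᵀ = 1 ∧ c = frobNorm (Z₁ - Z₂ * R)} with hs
  have hne : s.Nonempty := by
    refine ⟨frobNorm (Z₁ - Z₂ * 1), 1, ?_, ?_, rfl⟩ <;>
      simp [Matrix.transpose_one]
  have hd0 : 0 ≤ dd := by
    rw [hdd]
    exact Real.sInf_nonneg fun c hc => by
      obtain ⟨R, _, _, rfl⟩ := hc
      exact frob_nonneg _
  have hS0 : 0 ≤ S := spec_nonneg _
  have hbound : ∀ ε : ℝ, 0 < ε →
      (frobNorm (U₁ * V₁ᵀ - U₂ * V₂ᵀ)) ^ 2 ≤ 2 * (S + (dd + ε)) ^ 2 * (dd + ε) ^ 2 := by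
    intro ε hε
    obtain ⟨c, hc, hlt⟩ := Real.lt_sInf_add_pos hne hε
    obtain ⟨R, h1, h2, rfl⟩ := hc
    have hk := key U₁ U₂ V₁ V₂ R h1 h2
    set D := frobNorm (Z₁ - Z₂ * R) with hDdef
    have hD0 : 0 ≤ D := frob_nonneg _
    have hDlt : D ≤ dd + ε := by
      have : sInf s = dd := rfl
      rw [this] at hlt
      exact hlt.le
    have hkey : (frobNorm (U₁ * V₁ᵀ - U₂ * V₂ᵀ)) ^ 2 ≤ 2 * (S + D) ^ 2 * D ^ 2 := hk
    have e1 : (S + D) ^ 2 ≤ (S + (dd + ε)) ^ 2 :=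
      pow_le_pow_left₀ (add_nonneg hS0 hD0) (by linarith) 2
    have e2 : D ^ 2 ≤ (dd + ε) ^ 2 := pow_le_pow_left₀ hD0 hDlt 2
    have e3 := mul_le_mul e1 e2 (sq_nonneg D) (sq_nonneg (S + (dd + ε)))
    nlinarith
  have hlim : Filter.Tendsto (fun ε : ℝ => 2 * (S + (dd + ε)) ^ 2 * (dd + ε) ^ 2)
      (nhdsWithin 0 (Set.Ioi 0)) (nhds (2 * (S + dd) ^ 2 * dd ^ 2)) := by
    have hc : Continuous fun ε : ℝ => 2 * (S + (dd + ε)) ^ 2 * (dd + ε) ^ 2 := by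
      continuity
    have := (hc.tendsto 0).mono_left (nhdsWithin_le_nhds (s := Set.Ioi (0:ℝ)))
    simpa using this
  exact ge_of_tendsto hlim
    (Filter.eventually_of_mem self_mem_nhdsWithin fun ε hε => hbound ε hε)
end

section
/- For i = 1, 2 let U_i ∈ ℝ^{d₁×r} and V_i ∈ ℝ^{d₂×r}. Then for every orthogonal matrix R ∈ ℝ^{r×r} (RᵀR = R Rᵀ = I_r): ‖U₁V₁ᵀ − U₂V₂ᵀ‖_F² ≤ 2 · (‖V₂‖₂² · ‖U₁ − U₂R‖_F² + ‖U₁‖₂² · ‖V₁ − V₂R‖_F²), where ‖·‖_F denotes the Frobenius norm and ‖·‖₂ the spectral (operator) norm. -/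
open Matrix BigOperators Finset

/-!
Rotating the second factorisation by an orthogonal `R` does not change the product:
`U₂V₂ᵀ = (U₂R)(V₂R)ᵀ`. Hence `U₁V₁ᵀ − U₂V₂ᵀ = (U₁ − U₂R)(V₂R)ᵀ + U₁(V₁ − V₂R)ᵀ`, and each
summand is bounded by `‖A Bᵀ‖_F ≤ ‖A‖_F ‖B‖₂` (row by row, this is the definition of the
spectral norm), using `‖V₂R‖₂ ≤ ‖V₂‖₂`. The factor `2` comes from `(a + b)² ≤ 2(a² + b²)`.
-/

lemma mul_transpose_sub_mul_transpose_eq {m n k : Type*} [Fintype k] [DecidableEq k]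
    (U₁ U₂ : Matrix m k ℝ) (V₁ V₂ : Matrix n k ℝ) {R : Matrix k k ℝ} (hR : R * Rᵀ = 1) :
    U₁ * V₁ᵀ - U₂ * V₂ᵀ = (U₁ - U₂ * R) * (V₂ * R)ᵀ + U₁ * (V₁ - V₂ * R)ᵀ := by
  simp only [transpose_mul, transpose_sub, Matrix.sub_mul, Matrix.mul_sub, Matrix.mul_assoc]
  rw [← Matrix.mul_assoc R Rᵀ V₂ᵀ, hR, Matrix.one_mul]
  abel

variable {m n k : Type*} [Fintype m] [Fintype n] [Fintype k]

lemma frobNorm_nonneg (A : Matrix m n ℝ) : 0 ≤ frobNorm A :=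
  Real.sqrt_nonneg _

lemma frobNorm_sq (A : Matrix m n ℝ) : frobNorm A ^ 2 = ∑ i, ∑ j, A i j ^ 2 := by
  rw [frobNorm, Real.sq_sqrt]
  positivity

lemma frobNorm_transpose (A : Matrix m n ℝ) : frobNorm Aᵀ = frobNorm A := by
  simp only [frobNorm, transpose_apply]
  rw [Finset.sum_comm]

lemma frobNorm_add_sq_le (A B : Matrix m n ℝ) :
    frobNorm (A + B) ^ 2 ≤ 2 * (frobNorm A ^ 2 + frobNorm B ^ 2) := by
  simp only [frobNorm_sq, Matrix.add_apply, ← Finset.sum_add_distrib, Finset.mul_sum]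
  gcongr with i _ j _
  exact add_sq_le

lemma sum_smul_sq (c : ℝ) (x : n → ℝ) : ∑ j, (c • x) j ^ 2 = c ^ 2 * ∑ j, x j ^ 2 := by
  simp only [Pi.smul_apply, smul_eq_mul, mul_pow, Finset.mul_sum]

lemma specNorm_nonneg (A : Matrix m n ℝ) : 0 ≤ specNorm A :=
  Real.sSup_nonneg fun _ ⟨_, _, hc⟩ => hc ▸ Real.sqrt_nonneg _

lemma specNorm_bddAbove (A : Matrix m n ℝ) :
    BddAbove {c | ∃ x : n → ℝ, ∑ j, x j ^ 2 = 1 ∧ c = √(∑ i, (A *ᵥ x) i ^ 2)} := by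
  refine ⟨frobNorm A, ?_⟩
  rintro _ ⟨x, hx, rfl⟩
  refine Real.sqrt_le_sqrt (Finset.sum_le_sum fun i _ => ?_)
  calc (A *ᵥ x) i ^ 2 = (∑ j, A i j * x j) ^ 2 := rfl
    _ ≤ (∑ j, A i j ^ 2) * ∑ j, x j ^ 2 := Finset.sum_mul_sq_le_sq_mul_sq _ _ _
    _ = ∑ j, A i j ^ 2 := by rw [hx, mul_one]

lemma sum_mulVec_sq_le_of_sum_sq_eq_one (A : Matrix m n ℝ) {x : n → ℝ}
    (hx : ∑ j, x j ^ 2 = 1) : ∑ i, (A *ᵥ x) i ^ 2 ≤ specNorm A ^ 2 :=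
  (Real.sqrt_le_iff.1 (le_csSup (specNorm_bddAbove A) ⟨x, hx, rfl⟩)).2

lemma sum_mulVec_sq_le (A : Matrix m n ℝ) (x : n → ℝ) :
    ∑ i, (A *ᵥ x) i ^ 2 ≤ specNorm A ^ 2 * ∑ j, x j ^ 2 := by
  obtain hx | hx := (Finset.sum_nonneg fun j _ => sq_nonneg (x j)).eq_or_lt
  · have hx0 : x = 0 := funext fun j => pow_eq_zero_iff two_ne_zero |>.1 <|
      (Finset.sum_eq_zero_iff_of_nonneg fun j _ => sq_nonneg (x j)).1 hx.symm j (mem_univ j)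
    simp [hx0]
  set s := √(∑ j, x j ^ 2)
  have hs2 : s ^ 2 = ∑ j, x j ^ 2 := Real.sq_sqrt hx.le
  have hs : 0 < s ^ 2 := hs2 ▸ hx
  have hunit : ∑ j, (s⁻¹ • x) j ^ 2 = 1 := by
    rw [sum_smul_sq, inv_pow, hs2, inv_mul_cancel₀ hx.ne']
  have h := sum_mulVec_sq_le_of_sum_sq_eq_one A hunit
  rw [mulVec_smul, sum_smul_sq, inv_pow, inv_mul_le_iff₀ hs] at h
  rwa [← hs2, mul_comm]

lemma specNorm_le_of_sum_mulVec_sq_le {A : Matrix m n ℝ} {c : ℝ} (hc : 0 ≤ c)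
    (h : ∀ x, ∑ i, (A *ᵥ x) i ^ 2 ≤ c ^ 2 * ∑ j, x j ^ 2) : specNorm A ≤ c := by
  refine Real.sSup_le ?_ hc
  rintro _ ⟨x, hx, rfl⟩
  exact Real.sqrt_le_iff.2 ⟨hc, by simpa [hx] using h x⟩

lemma sum_mulVec_sq_of_transpose_mul_self_eq_one [DecidableEq n] {R : Matrix k n ℝ}
    (hR : Rᵀ * R = 1) (x : n → ℝ) : ∑ j, (R *ᵥ x) j ^ 2 = ∑ j, x j ^ 2 := by
  simp only [sq]
  change (R *ᵥ x) ⬝ᵥ (R *ᵥ x) = x ⬝ᵥ x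
  rw [dotProduct_mulVec, ← mulVec_transpose, mulVec_mulVec, hR, one_mulVec]

lemma specNorm_mul_le_of_transpose_mul_self_eq_one [DecidableEq n] (V : Matrix m k ℝ)
    {R : Matrix k n ℝ} (hR : Rᵀ * R = 1) : specNorm (V * R) ≤ specNorm V := by
  refine specNorm_le_of_sum_mulVec_sq_le (specNorm_nonneg V) fun x => ?_
  rw [← mulVec_mulVec, ← sum_mulVec_sq_of_transpose_mul_self_eq_one hR x]
  exact sum_mulVec_sq_le V (R *ᵥ x)

lemma frobNorm_mul_transpose_le_frobNorm_mul_specNorm (A : Matrix m k ℝ) (B : Matrix n k ℝ) :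
    frobNorm (A * Bᵀ) ≤ frobNorm A * specNorm B := by
  have hrow : ∀ i j, (A * Bᵀ) i j = (B *ᵥ A i) j := fun i j => by
    simp only [mul_apply, transpose_apply, mulVec, dotProduct, mul_comm]
  rw [← pow_le_pow_iff_left₀ (frobNorm_nonneg _)
    (mul_nonneg (frobNorm_nonneg A) (specNorm_nonneg B)) two_ne_zero,
    mul_pow, frobNorm_sq, frobNorm_sq, mul_comm, Finset.mul_sum]
  simp only [hrow]
  exact Finset.sum_le_sum fun i _ => sum_mulVec_sq_le B (A i)

lemma frobNorm_mul_transpose_le_specNorm_mul_frobNorm (A : Matrix m k ℝ) (B : Matrix n k ℝ) :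
    frobNorm (A * Bᵀ) ≤ specNorm A * frobNorm B := by
  rw [← frobNorm_transpose, transpose_mul, transpose_transpose, mul_comm]
  exact frobNorm_mul_transpose_le_frobNorm_mul_specNorm B A

/-- Main chain of estimates in the proof of Proposition S.4: for every `r × r`
orthogonal matrix `R`,
`‖U₁V₁ᵀ − U₂V₂ᵀ‖_F² ≤ 2 (‖V₂‖₂² ‖U₁ − U₂R‖_F² + ‖U₁‖₂² ‖V₁ − V₂R‖_F²)`. -/
theorem factored_diff_frobNorm_sq_bound {d₁ d₂ r : ℕ}
    (U₁ U₂ : Matrix (Fin d₁) (Fin r) ℝ) (V₁ V₂ : Matrix (Fin d₂) (Fin r) ℝ)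
    (R : Matrix (Fin r) (Fin r) ℝ) (hR₁ : Rᵀ * R = 1) (hR₂ : R * Rᵀ = 1) :
    (frobNorm (U₁ * V₁ᵀ - U₂ * V₂ᵀ)) ^ 2
      ≤ 2 * ((specNorm V₂) ^ 2 * (frobNorm (U₁ - U₂ * R)) ^ 2
              + (specNorm U₁) ^ 2 * (frobNorm (V₁ - V₂ * R)) ^ 2) := by
  have hU : frobNorm ((U₁ - U₂ * R) * (V₂ * R)ᵀ) ≤ frobNorm (U₁ - U₂ * R) * specNorm V₂ :=
    (frobNorm_mul_transpose_le_frobNorm_mul_specNorm _ _).trans <| mul_le_mul_of_nonneg_left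
      (specNorm_mul_le_of_transpose_mul_self_eq_one V₂ hR₁) (frobNorm_nonneg _)
  have hV := frobNorm_mul_transpose_le_specNorm_mul_frobNorm U₁ (V₁ - V₂ * R)
  calc frobNorm (U₁ * V₁ᵀ - U₂ * V₂ᵀ) ^ 2
      = frobNorm ((U₁ - U₂ * R) * (V₂ * R)ᵀ + U₁ * (V₁ - V₂ * R)ᵀ) ^ 2 := by
        rw [mul_transpose_sub_mul_transpose_eq U₁ U₂ V₁ V₂ hR₂]
    _ ≤ 2 * (frobNorm ((U₁ - U₂ * R) * (V₂ * R)ᵀ) ^ 2 + frobNorm (U₁ * (V₁ - V₂ * R)ᵀ) ^ 2) :=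
        frobNorm_add_sq_le _ _
    _ ≤ 2 * ((frobNorm (U₁ - U₂ * R) * specNorm V₂) ^ 2
          + (specNorm U₁ * frobNorm (V₁ - V₂ * R)) ^ 2) := by
        gcongr <;> exact frobNorm_nonneg _
    _ = _ := by ring
end
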